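/- Let K ≥ 2. A permutation σ of size K+1 with exactly one descent fails to be obtainable from the identity 1 2 ... (K+1) by one duplication-loss step of width at most K if and only if σ does not start with the value 1 and does not end with the value K+1. -/

import Mathlib

def descents (l : List ℕ) : ℕ :=
  (l.zip l.tail).countP (fun p => decide (p.2 < p.1))
def IsPermList (n : ℕ) (l : List ℕ) : Prop :=
  l.Perm (List.range' 1 n)
inductive Interleave : List ℕ → List ℕ → List ℕ → Prop
  | nil : Interleave [] [] []
  | left {x : ℕ} {l a b : List ℕ} : Interleave l a b → Interleave (x :: l) (x :: a) b
  | right {x : ℕ} {l a b : List ℕ} : Interleave l a b → Interleave (x :: l) a (x :: b)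

def DLStep (K : ℕ) (τ σ : List ℕ) : Prop :=
  ∃ pre w post w1 w2 : List ℕ, τ = pre ++ w ++ post ∧ w.length ≤ K ∧
    Interleave w w1 w2 ∧ σ = pre ++ (w1 ++ w2) ++ post

def DLIter (K : ℕ) : ℕ → List ℕ → List ℕ → Prop
  | 0, τ, σ => τ = σ
  | p + 1, τ, σ => ∃ μ, DLStep K τ μ ∧ DLIter K p μ σ

def ObtainableIn (K p : ℕ) (τ σ : List ℕ) : Prop :=
  ∃ q ≤ p, DLIter K q τ σ

/-!
A step of width at most `K` on a list of length `K + 1` leaves its first or its last entry in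
place, so every permutation reachable from the identity in one step starts with `1` or ends with
`K + 1`. Conversely, a list with one descent is the concatenation of two increasing runs. If it
starts with `1` (ends with `K + 1`), the other `K` entries are a permutation of a sorted window of
the identity, and that window is the merge of the two runs, hence an interleaving of them: one step
on this window produces the list.
-/

lemma descents_cons_cons (x y : ℕ) (t : List ℕ) :
    descents (x :: y :: t) = descents (y :: t) + if y < x then 1 else 0 := by
  simp [descents, List.countP_cons]

lemma descents_le_cons (x : ℕ) : ∀ l : List ℕ, descents l ≤ descents (x :: l)
  | [] => le_rfl
  | y :: t => by rw [descents_cons_cons]; omega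

lemma descents_le_append (t : List ℕ) : ∀ l : List ℕ, descents l ≤ descents (l ++ t)
  | [] => Nat.zero_le _
  | [x] => Nat.zero_le _
  | x :: y :: l => by
    have := descents_le_append t (y :: l)
    simp only [List.cons_append, descents_cons_cons] at this ⊢
    omega

lemma descents_eq_zero_iff : ∀ {l : List ℕ}, descents l = 0 ↔ l.SortedLE
  | [] => by simpa [descents] using List.Pairwise.nil.sortedLE
  | [x] => by simpa [descents] using (List.pairwise_singleton _ x).sortedLE
  | x :: y :: t => by
    rw [descents_cons_cons, List.sortedLE_iff_isChain, List.isChain_cons_cons,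
      ← List.sortedLE_iff_isChain, ← descents_eq_zero_iff]
    split_ifs <;> grind

lemma exists_append_sortedLE_of_descents_le_one :
    ∀ {l : List ℕ}, descents l ≤ 1 → ∃ A B, l = A ++ B ∧ A.SortedLE ∧ B.SortedLE
  | [], _ => ⟨[], [], rfl, List.Pairwise.nil.sortedLE, List.Pairwise.nil.sortedLE⟩
  | [x], _ => ⟨[x], [], rfl, (List.pairwise_singleton _ x).sortedLE, List.Pairwise.nil.sortedLE⟩
  | x :: y :: t, hd => by
    rw [descents_cons_cons] at hd
    by_cases hyx : y < x
    · refine ⟨[x], y :: t, rfl, (List.pairwise_singleton _ x).sortedLE, ?_⟩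
      rw [← descents_eq_zero_iff]
      simp only [hyx, if_true] at hd
      omega
    · obtain ⟨A, B, hAB, hA, hB⟩ :=
        exists_append_sortedLE_of_descents_le_one (l := y :: t) (by omega)
      refine ⟨x :: A, B, by rw [hAB]; rfl, ?_, hB⟩
      rw [List.sortedLE_iff_isChain, List.isChain_cons]
      refine ⟨fun a ha => ?_, List.sortedLE_iff_isChain.1 hA⟩
      cases A with
      | nil => simp at ha
      | cons a' A' =>
        simp only [List.cons_append, List.cons.injEq, List.head?_cons,
          Option.mem_some_iff] at hAB ha
        omega

lemma interleave_nil_left : ∀ l : List ℕ, Interleave l [] l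
  | [] => .nil
  | _ :: l => .right (interleave_nil_left l)

lemma interleave_nil_right : ∀ l : List ℕ, Interleave l l []
  | [] => .nil
  | _ :: l => .left (interleave_nil_right l)

lemma interleave_merge (xs ys : List ℕ) : Interleave (xs.merge ys) xs ys := by
  induction xs, ys using List.merge.induct (fun a b : ℕ => decide (a ≤ b)) with
  | case1 ys => simpa using interleave_nil_left ys
  | case2 xs _ => simpa using interleave_nil_right xs
  | case3 x xs y ys hxy ih => rw [List.cons_merge_cons, if_pos hxy]; exact .left ih
  | case4 x xs y ys hxy ih => rw [List.cons_merge_cons, if_neg hxy]; exact .right ih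

lemma interleave_of_perm_append {s w₁ w₂ : List ℕ} (hs : s.SortedLE) (h₁ : w₁.SortedLE)
    (h₂ : w₂.SortedLE) (hp : s.Perm (w₁ ++ w₂)) : Interleave s w₁ w₂ := by
  have : w₁.merge w₂ = s :=
    ((List.merge_perm_append _).trans hp.symm).eq_of_sortedLE
      (h₁.pairwise.merge h₂.pairwise).sortedLE hs
  exact this ▸ interleave_merge w₁ w₂

lemma dlStep_of_perm_of_descents_le_one {K : ℕ} {s m : List ℕ} (hs : s.SortedLE)
    (hK : s.length ≤ K) (hm : m.Perm s) (hd : descents m ≤ 1) (pre post : List ℕ) :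
    DLStep K (pre ++ s ++ post) (pre ++ m ++ post) := by
  obtain ⟨A, B, rfl, hA, hB⟩ := exists_append_sortedLE_of_descents_le_one hd
  exact ⟨pre, s, post, A, B, rfl, hK, interleave_of_perm_append hs hA hB hm.symm, rfl⟩

lemma DLStep.head?_eq_or_getLast?_eq {K : ℕ} {τ σ : List ℕ} (h : DLStep K τ σ)
    (hK : K < τ.length) : σ.head? = τ.head? ∨ σ.getLast? = τ.getLast? := by
  obtain ⟨pre, w, post, w₁, w₂, rfl, hw, -, rfl⟩ := h
  rcases pre with _ | ⟨a, pre⟩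
  · have hpost : post ≠ [] := by rintro rfl; simp at hK; omega
    right
    simp only [List.getLast?_append_of_ne_nil _ hpost]
  · left
    rfl

theorem stmt10_general (K : ℕ) (l : List ℕ) (h : IsPermList (K + 1) l)
    (hd : descents l = 1) :
    ¬ DLStep K (List.range' 1 (K + 1)) l ↔ (l.getD 0 0 ≠ 1 ∧ l.getD K 0 ≠ K + 1) := by
  have hlen : l.length = K + 1 := by simpa using h.length_eq
  have hhead_iff : l.getD 0 0 = 1 ↔ l.head? = some 1 := by
    simp [List.getD_eq_getElem?_getD, List.head?_eq_getElem?, Option.getD_eq_iff]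
  have hlast_iff : l.getD K 0 = K + 1 ↔ l.getLast? = some (K + 1) := by
    simp [List.getD_eq_getElem?_getD, List.getLast?_eq_getElem?, hlen]
  rw [← not_or, not_iff_not, hhead_iff, hlast_iff]
  constructor
  · intro hstep
    simpa [List.head?_range', List.getLast?_range'] using
      hstep.head?_eq_or_getLast?_eq (by simp)
  · rintro (hhead | hlast)
    · obtain ⟨m, rfl⟩ := List.head?_eq_some_iff.1 hhead
      have hm : m.Perm (List.range' 2 K) := by
        rw [IsPermList, List.range'_succ] at h
        exact (List.perm_cons 1).1 h
      simpa [List.range'_succ] using dlStep_of_perm_of_descents_le_one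
        (List.sortedLE_range' 2 K 1) (by simp) hm (hd ▸ descents_le_cons 1 m) [1] []
    · obtain ⟨m, rfl⟩ := List.getLast?_eq_some_iff.1 hlast
      have hm : m.Perm (List.range' 1 K) := by
        rw [IsPermList, List.range'_concat, Nat.one_mul, Nat.add_comm 1 K] at h
        exact (List.perm_append_right_iff _).1 h
      simpa [List.range'_concat, Nat.add_comm 1 K] using dlStep_of_perm_of_descents_le_one
        (K := K) (List.sortedLE_range' 1 K 1) (by simp) hm (hd ▸ descents_le_append [K + 1] m)
        [] [K + 1]

theorem stmt10 (K : ℕ) (hK : 2 ≤ K) (l : List ℕ) (h : IsPermList (K + 1) l)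
    (hd : descents l = 1) :
    ¬ DLStep K (List.range' 1 (K + 1)) l ↔ (l.getD 0 0 ≠ 1 ∧ l.getD K 0 ≠ K + 1) :=
  stmt10_general K l h hd
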